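/- Let P, Q, R, S be A-bounded operators on H. Then ω_𝔸([[P,Q],[R,S]]) ≥ max{ ω_𝔸([[0,Q],[R,0]]), max{ω_A(P), ω_A(S)} }. -/

import Mathlib

open ContinuousLinearMap

/-- The `A`-seminorm of a vector: `‖x‖_A = √⟨Ax, x⟩`. -/
noncomputable def vnormA {H : Type*} [NormedAddCommGroup H] [InnerProductSpace ℂ H]
    (A : H →L[ℂ] H) (x : H) : ℝ :=
  Real.sqrt (RCLike.re (inner ℂ (A x) x : ℂ))

/-- `T` is `A`-bounded, i.e. `T ∈ B_{A^{1/2}}(H)`. -/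
def ABounded {H : Type*} [NormedAddCommGroup H] [InnerProductSpace ℂ H]
    (A T : H →L[ℂ] H) : Prop :=
  ∃ c : ℝ, 0 < c ∧ ∀ x, vnormA A (T x) ≤ c * vnormA A x

/-- The `A`-operator seminorm `‖T‖_A = sup{‖Tx‖_A : ‖x‖_A = 1}`. -/
noncomputable def opNormA {H : Type*} [NormedAddCommGroup H] [InnerProductSpace ℂ H]
    (A T : H →L[ℂ] H) : ℝ :=
  sSup {c : ℝ | ∃ x : H, vnormA A x = 1 ∧ c = vnormA A (T x)}

/-- The `A`-numerical radius `ω_A(T) = sup{|⟨ATx, x⟩| : ‖x‖_A = 1}`. -/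
noncomputable def wA {H : Type*} [NormedAddCommGroup H] [InnerProductSpace ℂ H]
    (A T : H →L[ℂ] H) : ℝ :=
  sSup {c : ℝ | ∃ x : H, vnormA A x = 1 ∧ c = ‖(inner ℂ (A (T x)) x : ℂ)‖}

/-- `Ts` is the reduced (Douglas) solution of `AX = T*A`, i.e. `Ts = T^{♯_A}`. -/
def IsReducedAdjoint {H : Type*} [NormedAddCommGroup H] [InnerProductSpace ℂ H]
    [CompleteSpace H] (A T Ts : H →L[ℂ] H) : Prop :=
  A ∘L Ts = (ContinuousLinearMap.adjoint T) ∘L A ∧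
    ∀ y, Ts y ∈ closure (Set.range A)

/-- The `2 × 2` operator matrix `[[P, Q], [R, S]]` acting on `H ⊕ H` (with the `ℓ²` product
inner product). -/
noncomputable def blk {H : Type*} [NormedAddCommGroup H] [InnerProductSpace ℂ H]
    (P Q R S : H →L[ℂ] H) : WithLp 2 (H × H) →L[ℂ] WithLp 2 (H × H) :=
  letI e := (WithLp.prodContinuousLinearEquiv 2 ℂ H H)
  (e.symm.toContinuousLinearMap) ∘L
    ((P.comp (fst ℂ H H) + Q.comp (snd ℂ H H)).prod
      (R.comp (fst ℂ H H) + S.comp (snd ℂ H H))) ∘L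
    (e.toContinuousLinearMap)

/-- `𝔸 = diag(A, A)` on `H ⊕ H`. -/
noncomputable def AA {H : Type*} [NormedAddCommGroup H] [InnerProductSpace ℂ H]
    (A : H →L[ℂ] H) : WithLp 2 (H × H) →L[ℂ] WithLp 2 (H × H) :=
  blk A 0 0 A

/-! Since `A = (A^{1/2})²`, the form `⟪A x, y⟫` equals `⟪A^{1/2} x, A^{1/2} y⟫`, so Cauchy–Schwarz
bounds it by `‖x‖_A ‖y‖_A`; hence the quadratic form of an operator matrix with `A`-bounded
entries is bounded on the `𝔸`-unit sphere and `ω_𝔸` is an honest supremum. The lower bounds come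
from testing it on particular `𝔸`-unit vectors: `(x, 0)` and `(0, x)` see only `P` and `S`, and
the form of the off-diagonal part at `y` is half the difference of the forms at `(y₁, y₂)` and
`(y₁, -y₂)`. -/

open scoped InnerProductSpace

section Seminorm

variable {H : Type*} [NormedAddCommGroup H] [InnerProductSpace ℂ H] [CompleteSpace H]
  {A : H →L[ℂ] H}

namespace ContinuousLinearMap.IsPositive

lemma inner_apply_eq_inner_sqrt (hA : A.IsPositive) (x y : H) :
    ⟪A x, y⟫_ℂ = ⟪CFC.sqrt A x, CFC.sqrt A y⟫_ℂ := by
  have hA₀ : 0 ≤ A := (nonneg_iff_isPositive A).mpr hA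
  have hsqrt : (CFC.sqrt A).IsPositive := (nonneg_iff_isPositive _).mp (CFC.sqrt_nonneg A)
  rw [hA.inner_left_eq_inner_right, hsqrt.inner_left_eq_inner_right,
    ← mul_apply_eq_comp (CFC.sqrt A), CFC.sqrt_mul_sqrt_self A hA₀]

lemma vnormA_eq_norm_sqrt (hA : A.IsPositive) (x : H) : vnormA A x = ‖CFC.sqrt A x‖ := by
  rw [vnormA, hA.inner_apply_eq_inner_sqrt, inner_self_eq_norm_sq, Real.sqrt_sq (norm_nonneg _)]

lemma norm_inner_le_vnormA_mul_vnormA (hA : A.IsPositive) (x y : H) :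
    ‖⟪A x, y⟫_ℂ‖ ≤ vnormA A x * vnormA A y := by
  rw [hA.inner_apply_eq_inner_sqrt, hA.vnormA_eq_norm_sqrt, hA.vnormA_eq_norm_sqrt]
  exact norm_inner_le_norm _ _

end ContinuousLinearMap.IsPositive

lemma ABounded.exists_norm_inner_le {T : H →L[ℂ] H} (hA : A.IsPositive) (hT : ABounded A T) :
    ∃ c, ∀ x y, vnormA A x ≤ 1 → vnormA A y ≤ 1 → ‖⟪A (T x), y⟫_ℂ‖ ≤ c := by
  obtain ⟨c, hc, hTc⟩ := hT
  refine ⟨c, fun x y hx hy => ?_⟩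
  calc ‖⟪A (T x), y⟫_ℂ‖ ≤ vnormA A (T x) * vnormA A y := hA.norm_inner_le_vnormA_mul_vnormA _ _
    _ ≤ (c * vnormA A x) * 1 :=
      mul_le_mul (hTc x) hy (Real.sqrt_nonneg _) (mul_nonneg hc.le (Real.sqrt_nonneg _))
    _ ≤ c := by rw [mul_one]; exact mul_le_of_le_one_right hc.le hx

end Seminorm

section Block

variable {H : Type*} [NormedAddCommGroup H] [InnerProductSpace ℂ H]

lemma blk_fst (P Q R S : H →L[ℂ] H) (x : WithLp 2 (H × H)) :
    (blk P Q R S x).fst = P x.fst + Q x.snd := rfl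

lemma blk_snd (P Q R S : H →L[ℂ] H) (x : WithLp 2 (H × H)) :
    (blk P Q R S x).snd = R x.fst + S x.snd := rfl

lemma AA_fst (A : H →L[ℂ] H) (x : WithLp 2 (H × H)) : (AA A x).fst = A x.fst := by
  simp [AA, blk_fst]

lemma AA_snd (A : H →L[ℂ] H) (x : WithLp 2 (H × H)) : (AA A x).snd = A x.snd := by
  simp [AA, blk_snd]

lemma inner_AA (A : H →L[ℂ] H) (x y : WithLp 2 (H × H)) :
    ⟪AA A x, y⟫_ℂ = ⟪A x.fst, y.fst⟫_ℂ + ⟪A x.snd, y.snd⟫_ℂ := by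
  rw [WithLp.prod_inner_apply]
  simp only [WithLp.ofLp_fst, WithLp.ofLp_snd, AA_fst, AA_snd]

lemma inner_AA_blk (A P Q R S : H →L[ℂ] H) (x : WithLp 2 (H × H)) :
    ⟪AA A (blk P Q R S x), x⟫_ℂ = ⟪A (P x.fst), x.fst⟫_ℂ + ⟪A (Q x.snd), x.fst⟫_ℂ +
      ⟪A (R x.fst), x.snd⟫_ℂ + ⟪A (S x.snd), x.snd⟫_ℂ := by
  simp only [inner_AA, blk_fst, blk_snd, map_add, inner_add_left]
  ring

lemma vnormA_AA (A : H →L[ℂ] H) (x : WithLp 2 (H × H)) :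
    vnormA (AA A) x = √(RCLike.re ⟪A x.fst, x.fst⟫_ℂ + RCLike.re ⟪A x.snd, x.snd⟫_ℂ) := by
  rw [vnormA, inner_AA, map_add]

lemma vnormA_fst_le_one_and_snd_le_one {A : H →L[ℂ] H} (hA : A.IsPositive)
    {x : WithLp 2 (H × H)} (hx : vnormA (AA A) x = 1) :
    vnormA A x.fst ≤ 1 ∧ vnormA A x.snd ≤ 1 := by
  rw [vnormA_AA, Real.sqrt_eq_one] at hx
  have h₁ := hA.re_inner_nonneg_left x.fst
  have h₂ := hA.re_inner_nonneg_left x.snd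
  exact ⟨Real.sqrt_le_one.mpr (by linarith), Real.sqrt_le_one.mpr (by linarith)⟩

lemma vnormA_AA_toLp_inl (A : H →L[ℂ] H) (x : H) :
    vnormA (AA A) (WithLp.toLp 2 (x, 0)) = vnormA A x := by
  rw [vnormA_AA, WithLp.toLp_fst, WithLp.toLp_snd]
  simp [vnormA]

lemma vnormA_AA_toLp_inr (A : H →L[ℂ] H) (x : H) :
    vnormA (AA A) (WithLp.toLp 2 (0, x)) = vnormA A x := by
  rw [vnormA_AA, WithLp.toLp_fst, WithLp.toLp_snd]
  simp [vnormA]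

lemma vnormA_AA_toLp_neg_snd (A : H →L[ℂ] H) (x : WithLp 2 (H × H)) :
    vnormA (AA A) (WithLp.toLp 2 (x.fst, -x.snd)) = vnormA (AA A) x := by
  rw [vnormA_AA, vnormA_AA, WithLp.toLp_fst, WithLp.toLp_snd]
  simp

lemma inner_AA_blk_toLp_inl (A P Q R S : H →L[ℂ] H) (x : H) :
    ⟪AA A (blk P Q R S (WithLp.toLp 2 (x, 0))), WithLp.toLp 2 (x, 0)⟫_ℂ = ⟪A (P x), x⟫_ℂ := by
  simp only [inner_AA_blk, WithLp.toLp_fst, WithLp.toLp_snd, map_zero, inner_zero_right]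
  simp

lemma inner_AA_blk_toLp_inr (A P Q R S : H →L[ℂ] H) (x : H) :
    ⟪AA A (blk P Q R S (WithLp.toLp 2 (0, x))), WithLp.toLp 2 (0, x)⟫_ℂ = ⟪A (S x), x⟫_ℂ := by
  simp only [inner_AA_blk, WithLp.toLp_fst, WithLp.toLp_snd, map_zero, inner_zero_right]
  simp

lemma inner_AA_blk_offDiag (A P Q R S : H →L[ℂ] H) (x : WithLp 2 (H × H)) :
    ⟪AA A (blk 0 Q R 0 x), x⟫_ℂ = (⟪AA A (blk P Q R S x), x⟫_ℂ -
      ⟪AA A (blk P Q R S (WithLp.toLp 2 (x.fst, -x.snd))), WithLp.toLp 2 (x.fst, -x.snd)⟫_ℂ) /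
        2 := by
  simp only [inner_AA_blk, WithLp.toLp_fst, WithLp.toLp_snd, zero_apply, map_neg, map_zero,
    inner_neg_left, inner_neg_right, inner_zero_left]
  ring

end Block

section NumericalRadius

variable {E : Type*} [NormedAddCommGroup E] [InnerProductSpace ℂ E] {A T : E →L[ℂ] E}

lemma wA_nonneg : 0 ≤ wA A T :=
  Real.sSup_nonneg (by rintro _ ⟨x, -, rfl⟩; exact norm_nonneg _)

lemma wA_le {c : ℝ} (hc : 0 ≤ c) (h : ∀ x, vnormA A x = 1 → ‖⟪A (T x), x⟫_ℂ‖ ≤ c) :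
    wA A T ≤ c :=
  Real.sSup_le (by rintro _ ⟨x, hx, rfl⟩; exact h x hx) hc

lemma norm_inner_le_wA (hT : ∃ C, ∀ x, vnormA A x = 1 → ‖⟪A (T x), x⟫_ℂ‖ ≤ C) {x : E}
    (hx : vnormA A x = 1) : ‖⟪A (T x), x⟫_ℂ‖ ≤ wA A T := by
  obtain ⟨C, hC⟩ := hT
  exact le_csSup ⟨C, by rintro _ ⟨y, hy, rfl⟩; exact hC y hy⟩ ⟨x, hx, rfl⟩

end NumericalRadius

section BlockBound

variable {H : Type*} [NormedAddCommGroup H] [InnerProductSpace ℂ H] [CompleteSpace H]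
  {A : H →L[ℂ] H}

lemma exists_bound_inner_AA_blk (hA : A.IsPositive) {P Q R S : H →L[ℂ] H}
    (hP : ABounded A P) (hQ : ABounded A Q) (hR : ABounded A R) (hS : ABounded A S) :
    ∃ C, ∀ x, vnormA (AA A) x = 1 → ‖⟪AA A (blk P Q R S x), x⟫_ℂ‖ ≤ C := by
  obtain ⟨cP, hcP⟩ := hP.exists_norm_inner_le hA
  obtain ⟨cQ, hcQ⟩ := hQ.exists_norm_inner_le hA
  obtain ⟨cR, hcR⟩ := hR.exists_norm_inner_le hA
  obtain ⟨cS, hcS⟩ := hS.exists_norm_inner_le hA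
  refine ⟨cP + cQ + cR + cS, fun x hx => ?_⟩
  obtain ⟨h₁, h₂⟩ := vnormA_fst_le_one_and_snd_le_one hA hx
  rw [inner_AA_blk]
  refine norm_add₄_le.trans ?_
  gcongr
  exacts [hcP _ _ h₁ h₁, hcQ _ _ h₂ h₁, hcR _ _ h₁ h₂, hcS _ _ h₂ h₂]

end BlockBound

theorem stmt4 {H : Type*} [NormedAddCommGroup H] [InnerProductSpace ℂ H] [CompleteSpace H]
    (A : H →L[ℂ] H) (hA : A.IsPositive)
    (P Q R S : H →L[ℂ] H) (hP : ABounded A P) (hQ : ABounded A Q)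
    (hR : ABounded A R) (hS : ABounded A S) :
    max (wA (AA A) (blk 0 Q R 0)) (max (wA A P) (wA A S)) ≤
      wA (AA A) (blk P Q R S) := by
  have hle {x} (hx : vnormA (AA A) x = 1) :=
    norm_inner_le_wA (exists_bound_inner_AA_blk hA hP hQ hR hS) hx
  refine max_le (wA_le wA_nonneg fun x hx => ?_)
    (max_le (wA_le wA_nonneg fun x hx => ?_) (wA_le wA_nonneg fun x hx => ?_))
  · rw [inner_AA_blk_offDiag A P Q R S, norm_div, RCLike.norm_ofNat]
    linarith [norm_sub_le ⟪AA A (blk P Q R S x), x⟫_ℂ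
      ⟪AA A (blk P Q R S (WithLp.toLp 2 (x.fst, -x.snd))), WithLp.toLp 2 (x.fst, -x.snd)⟫_ℂ,
      hle hx, hle ((vnormA_AA_toLp_neg_snd A x).trans hx)]
  · rw [← inner_AA_blk_toLp_inl A P Q R S]
    exact hle ((vnormA_AA_toLp_inl A x).trans hx)
  · rw [← inner_AA_blk_toLp_inr A P Q R S]
    exact hle ((vnormA_AA_toLp_inr A x).trans hx)
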